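/- arXiv:2511.07767 — 6 statements merged into one kernel-verified Lean document; each statement's English description precedes it below -/
import Mathlib

section
/- Let f : ℝ^d → ℝ be convex and differentiable, let 0 < c_{t+1} ≤ 1 and β_{t+1} ∈ [0,1). Suppose y_{t+1} = (1−β_{t+1}) z_t + β_{t+1} x_{t+1} and x_{t+1} = (1−c_{t+1}) x_t + c_{t+1} z_t. Then for any minimizer x_⋆ of f: (1/c_{t+1}) f(x_{t+1}) − (1/c_{t+1} − 1) f(x_t) − f(x_⋆) ≤ ⟨∇f(y_{t+1}), z_t − x_⋆⟩. -/
open scoped InnerProductSpace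

lemma grad_inner_eq {d : ℕ} (f : EuclideanSpace ℝ (Fin d) → ℝ)
    (y w : EuclideanSpace ℝ (Fin d)) :
    ⟪gradient f y, w⟫_ℝ = fderiv ℝ f y w := by
  rw [gradient, ← InnerProductSpace.toDual_apply_apply,
    LinearIsometryEquiv.apply_symm_apply]

lemma grad_ineq {d : ℕ} (f : EuclideanSpace ℝ (Fin d) → ℝ)
    (hconv : ConvexOn ℝ Set.univ f) (hdiff : Differentiable ℝ f)
    (y v : EuclideanSpace ℝ (Fin d)) :
    f y + ⟪gradient f y, v - y⟫_ℝ ≤ f v := by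
  rw [grad_inner_eq]
  set g : ℝ → ℝ := fun t => f (y + t • (v - y)) with hg
  have hline : HasDerivAt (fun t : ℝ => y + t • (v - y)) (v - y) 0 := by
    simpa using ((hasDerivAt_id (0 : ℝ)).smul_const (v - y)).const_add y
  have hgd : HasDerivAt g (fderiv ℝ f y (v - y)) 0 := by
    have hf := (hdiff y).hasFDerivAt
    have h0 : y + (0 : ℝ) • (v - y) = y := by simp
    nth_rw 2 [← h0] at hf
    exact hf.comp_hasDerivAt 0 hline
  have hslope : Filter.Tendsto (slope g 0) (nhdsWithin 0 (Set.Ioi 0))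
      (nhds (fderiv ℝ f y (v - y))) :=
    (hasDerivAt_iff_tendsto_slope.mp hgd).mono_left
      (nhdsWithin_mono 0 (by intro t ht; exact ne_of_gt ht))
  have hbound : ∀ t : ℝ, 0 < t → t ≤ 1 → slope g 0 t ≤ f v - f y := by
    intro t ht ht1
    have hcomb : g t ≤ (1 - t) * f y + t * f v := by
      have := hconv.2 (Set.mem_univ y) (Set.mem_univ v)
        (by linarith : (0:ℝ) ≤ 1 - t) (le_of_lt ht) (by ring)
      have hpt : (1 - t) • y + t • v = y + t • (v - y) := by
        module
      rw [hpt] at this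
      simpa [smul_eq_mul] using this
    have hg0 : g 0 = f y := by simp [hg]
    rw [slope_def_field, sub_zero, div_le_iff₀ ht, hg0]
    nlinarith
  have hle : fderiv ℝ f y (v - y) ≤ f v - f y := by
    refine le_of_tendsto hslope ?_
    filter_upwards [Ioo_mem_nhdsGT_of_mem (by norm_num : (0:ℝ) ∈ Set.Ico 0 1)]
      with t ht
    exact hbound t ht.1 (le_of_lt ht.2)
  linarith

theorem schedule_free_key_lemma {d : ℕ}
    (f : EuclideanSpace ℝ (Fin d) → ℝ)
    (hconv : ConvexOn ℝ Set.univ f) (hdiff : Differentiable ℝ f)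
    (c β : ℝ) (hc : 0 < c) (hc1 : c ≤ 1) (hβ0 : 0 ≤ β) (hβ1 : β < 1)
    (x x' y' z xs : EuclideanSpace ℝ (Fin d))
    (hx' : x' = (1 - c) • x + c • z)
    (hy' : y' = (1 - β) • z + β • x')
    (hmin : ∀ v, f xs ≤ f v) :
    (1 / c) * f x' - (1 / c - 1) * f x - f xs ≤
      ⟪gradient f y', z - xs⟫_ℝ := by
  have hD0 : (0:ℝ) < 1 - β + β * c := by nlinarith
  have hDne : (1 - β + β * c : ℝ) ≠ 0 := ne_of_gt hD0
  have hcne : c ≠ 0 := ne_of_gt hc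
  -- x' is a convex combination of x and y'
  have hcomb : x' = ((1 - β) * (1 - c) / (1 - β + β * c)) • x
      + (c / (1 - β + β * c)) • y' := by
    subst hx'
    subst hy'
    match_scalars <;> field_simp [show (1 - β + c * β : ℝ) ≠ 0 by rw [mul_comm c β]; exact hDne] <;> ring
  have hfx' : f x' ≤ ((1 - β) * (1 - c) / (1 - β + β * c)) * f x
      + (c / (1 - β + β * c)) * f y' := by
    have h1 : (0:ℝ) ≤ (1 - β) * (1 - c) / (1 - β + β * c) := by
      apply div_nonneg; nlinarith; linarith
    have h2 : (0:ℝ) ≤ c / (1 - β + β * c) := by positivity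
    have h3 : (1 - β) * (1 - c) / (1 - β + β * c) + c / (1 - β + β * c) = 1 := by
      field_simp; ring
    have := hconv.2 (Set.mem_univ x) (Set.mem_univ y') h1 h2 h3
    rw [← hcomb] at this
    simpa [smul_eq_mul] using this
  have key3 : (1 - β + β * c) * f x' ≤ (1 - β) * (1 - c) * f x + c * f y' := by
    have h := mul_le_mul_of_nonneg_left hfx' hD0.le
    have e : (1 - β + β * c) * (((1 - β) * (1 - c) / (1 - β + β * c)) * f x
        + (c / (1 - β + β * c)) * f y')
        = (1 - β) * (1 - c) * f x + c * f y' := by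
      field_simp
    linarith [e.le, e.ge]
  set g := gradient f y' with hgdef
  -- gradient inequalities at y'
  have hgx : f y' + ⟪g, x - y'⟫_ℝ ≤ f x := grad_ineq f hconv hdiff y' x
  have hgxs : f y' + ⟪g, xs - y'⟫_ℝ ≤ f xs := grad_ineq f hconv hdiff y' xs
  -- geometric identities
  have hyx : y' - x = (1 - β + β * c) • (z - x) := by
    rw [hy', hx']; module
  have hinner_yx : ⟪g, y' - x⟫_ℝ = (1 - β + β * c) * ⟪g, z - x⟫_ℝ := by
    rw [hyx, real_inner_smul_right]
  have e1 : ⟪g, x - y'⟫_ℝ = -((1 - β + β * c) * ⟪g, z - x⟫_ℝ) := by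
    rw [← hinner_yx]
    have h : x - y' = -(y' - x) := by abel
    rw [h, inner_neg_right]
  have e2 : ⟪g, xs - y'⟫_ℝ
      = -((1 - β + β * c) * ⟪g, z - x⟫_ℝ) - ⟪g, x - xs⟫_ℝ := by
    rw [← hinner_yx]
    have h : xs - y' = -(y' - x) - (x - xs) := by abel
    rw [h, inner_sub_right, inner_neg_right]
  have e3 : ⟪g, z - xs⟫_ℝ = ⟪g, z - x⟫_ℝ + ⟪g, x - xs⟫_ℝ := by
    rw [← inner_add_right]
    have h : z - xs = (z - x) + (x - xs) := by abel
    rw [h]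
  set P : ℝ := ⟪g, z - x⟫_ℝ with hP
  set Q : ℝ := ⟪g, x - xs⟫_ℝ with hQ
  rw [e3]
  rw [e1] at hgx
  rw [e2] at hgxs
  have key1 : f y' - f x ≤ (1 - β + β * c) * P := by linarith
  have key2 : f y' - f xs ≤ (1 - β + β * c) * P + Q := by linarith
  -- multiply key1 by c*β*(1-c), key2 by c*(1-β+β*c), and add key3
  have k1 : c * (β * (1 - c)) * (f y' - f x)
      ≤ c * (β * (1 - c)) * ((1 - β + β * c) * P) :=
    mul_le_mul_of_nonneg_left key1 (mul_nonneg hc.le (mul_nonneg hβ0 (by linarith)))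
  have k2 : (c * (1 - β + β * c)) * (f y' - f xs)
      ≤ (c * (1 - β + β * c)) * ((1 - β + β * c) * P + Q) :=
    mul_le_mul_of_nonneg_left key2 (by positivity)
  have hmult : (1 - β + β * c) * f x' - (1 - β + β * c) * (1 - c) * f x
      - c * (1 - β + β * c) * f xs ≤ c * (1 - β + β * c) * (P + Q) := by
    linarith [k1, k2, key3]
  have hcD : (0:ℝ) < c * (1 - β + β * c) := mul_pos hc hD0
  rw [← mul_le_mul_iff_right₀ hcD]
  have hgoal' : c * (1 - β + β * c) * ((1 / c) * f x' - (1 / c - 1) * f x - f xs)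
      = (1 - β + β * c) * f x' - (1 - β + β * c) * (1 - c) * f x
        - c * (1 - β + β * c) * f xs := by
    field_simp
  rw [hgoal']
  exact hmult
end

section
/- Let f : ℝ^d → ℝ be convex and differentiable with minimizer x_⋆, let γ_0,…,γ_T > 0 and set c_t = γ_t / ∑_{i=0}^t γ_i. Let (x_t, y_t, z_t) satisfy the (deterministic) schedule-free recursion y_t = (1−β_t)z_{t−1} + β_t x_t, z_t = z_{t−1} − γ_t ∇f(y_t), x_{t+1} = (1−c_{t+1})x_t + c_{t+1}z_t with z_{−1} = x_0 and β_t ∈ [0,1). Then ∑_{t=0}^T γ_t (f(x_T) − f(x_⋆)) ≤ γ_0(f(x_0) − f(x_⋆)) + ∑_{t=0}^T γ_t ⟨∇f(y_t), z_{t−1} − x_⋆⟩. -/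
open Finset
open scoped InnerProductSpace

theorem grad_ineq_aux {F : Type*} [NormedAddCommGroup F] [InnerProductSpace ℝ F]
    [CompleteSpace F] (f : F → ℝ) (hconv : ConvexOn ℝ Set.univ f)
    (hdiff : Differentiable ℝ f) (u v : F) :
    f u + ⟪gradient f u, v - u⟫_ℝ ≤ f v := by
  have hinner : ⟪gradient f u, v - u⟫_ℝ = fderiv ℝ f u (v - u) := by
    rw [gradient, InnerProductSpace.toDual_symm_apply]
  set φ : ℝ → ℝ := fun s => f (u + s • (v - u)) with hφ
  have hline : ∀ s : ℝ, HasDerivAt (fun s : ℝ => u + s • (v - u)) (v - u) s := by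
    intro s
    simpa using ((hasDerivAt_id s).smul_const (v - u)).const_add u
  have hφd : HasDerivAt φ (fderiv ℝ f u (v - u)) 0 := by
    have h := (hdiff (u + (0:ℝ) • (v - u))).hasFDerivAt.comp_hasDerivAt 0 (hline 0)
    simp only [zero_smul, add_zero] at h
    exact h
  have hφc : ConvexOn ℝ Set.univ φ := by
    refine ⟨convex_univ, fun s _ t _ a b ha hb hab => ?_⟩
    have hpt : u + (a * s + b * t) • (v - u)
        = a • (u + s • (v - u)) + b • (u + t • (v - u)) := by
      match_scalars <;> [ (linear_combination (-1 : ℝ) * hab); ring ]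
    show f (u + (a • s + b • t) • (v - u)) ≤ a * f (u + s • (v - u)) + b * f (u + t • (v - u))
    rw [smul_eq_mul, smul_eq_mul, hpt]
    exact hconv.2 trivial trivial ha hb hab
  have hslope := hφc.le_slope_of_hasDerivAt (Set.mem_univ (0:ℝ)) (Set.mem_univ (1:ℝ)) one_pos hφd
  have h0 : φ 0 = f u := by simp [hφ]
  have h1 : φ 1 = f v := by simp [hφ]
  have : slope φ 0 1 = φ 1 - φ 0 := by
    rw [slope_def_field]; norm_num
  rw [this, h0, h1] at hslope
  rw [hinner]
  linarith

/-- Schedule-free (deterministic) key bound: here `Z t` denotes `z_{t-1}`,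
so `Z 0 = z_{-1} = x 0` and `Z (t+1) = z_t`. -/
theorem schedule_free_sum_bound {d : ℕ} (T : ℕ)
    (f : EuclideanSpace ℝ (Fin d) → ℝ)
    (hconv : ConvexOn ℝ Set.univ f) (hdiff : Differentiable ℝ f)
    (xs : EuclideanSpace ℝ (Fin d)) (hmin : ∀ v, f xs ≤ f v)
    (γ : ℕ → ℝ) (hγ : ∀ t, 0 < γ t)
    (β : ℕ → ℝ) (hβ : ∀ t, β t ∈ Set.Ico (0 : ℝ) 1)
    (c : ℕ → ℝ) (hc : ∀ t, c t = γ t / ∑ i ∈ range (t + 1), γ i)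
    (x y Z : ℕ → EuclideanSpace ℝ (Fin d))
    (hZ0 : Z 0 = x 0)
    (hy : ∀ t, y t = (1 - β t) • Z t + β t • x t)
    (hZ : ∀ t, Z (t + 1) = Z t - γ t • gradient f (y t))
    (hx : ∀ t, x (t + 1) = (1 - c (t + 1)) • x t + c (t + 1) • Z (t + 1)) :
    (∑ t ∈ range (T + 1), γ t) * (f (x T) - f xs) ≤
      γ 0 * (f (x 0) - f xs) +
        ∑ t ∈ range (T + 1), γ t * ⟪gradient f (y t), Z t - xs⟫_ℝ := by
  have grad := grad_ineq_aux f hconv hdiff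
  have hβ0 : ∀ t, 0 ≤ β t := fun t => (hβ t).1
  have hD : ∀ t, 0 < 1 - β t := fun t => sub_pos.mpr (hβ t).2
  have hSpos : ∀ n : ℕ, (0:ℝ) < ∑ i ∈ range (n+1), γ i := by
    intro n
    exact Finset.sum_pos (fun i _ => hγ i) ⟨0, mem_range.mpr (Nat.succ_pos n)⟩
  have hy0 : y 0 = x 0 := by rw [hy 0, hZ0]; module
  -- per-step inner product lower bound
  have keyB : ∀ t, (f (y t) - f xs) - β t * (f (x t) - f xs)
      ≤ (1 - β t) * ⟪gradient f (y t), Z t - xs⟫_ℝ := by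
    intro t
    have hvec : (1 - β t) • (Z t - y t) = β t • (y t - x t) := by rw [hy t]; module
    have h2 : (1 - β t) * ⟪gradient f (y t), Z t - y t⟫_ℝ
        = β t * ⟪gradient f (y t), y t - x t⟫_ℝ := by
      rw [← real_inner_smul_right, ← real_inner_smul_right, hvec]
    have hsplit : ⟪gradient f (y t), Z t - xs⟫_ℝ
        = ⟪gradient f (y t), Z t - y t⟫_ℝ + ⟪gradient f (y t), y t - xs⟫_ℝ := by
      rw [← inner_add_right]; congr 1; abel
    have g1 : f (y t) - f xs ≤ ⟪gradient f (y t), y t - xs⟫_ℝ := by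
      have h := grad (y t) xs
      have hneg : ⟪gradient f (y t), xs - y t⟫_ℝ = - ⟪gradient f (y t), y t - xs⟫_ℝ := by
        rw [← inner_neg_right]; congr 1; abel
      rw [hneg] at h; linarith
    have g2 : f (y t) - f (x t) ≤ ⟪gradient f (y t), y t - x t⟫_ℝ := by
      have h := grad (y t) (x t)
      have hneg : ⟪gradient f (y t), x t - y t⟫_ℝ = - ⟪gradient f (y t), y t - x t⟫_ℝ := by
        rw [← inner_neg_right]; congr 1; abel
      rw [hneg] at h; linarith
    calc (f (y t) - f xs) - β t * (f (x t) - f xs)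
        = β t * (f (y t) - f (x t)) + (1 - β t) * (f (y t) - f xs) := by ring
      _ ≤ β t * ⟪gradient f (y t), y t - x t⟫_ℝ
            + (1 - β t) * ⟪gradient f (y t), y t - xs⟫_ℝ :=
          add_le_add (mul_le_mul_of_nonneg_left g2 (hβ0 t))
            (mul_le_mul_of_nonneg_left g1 (hD t).le)
      _ = (1 - β t) * ⟪gradient f (y t), Z t - xs⟫_ℝ := by
          rw [hsplit, mul_add, h2]
  -- the per-step descent inequality for the weighted averages
  have step : ∀ n : ℕ, (∑ i ∈ range (n+1+1), γ i) * (f (x (n+1)) - f xs)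
      ≤ (∑ i ∈ range (n+1), γ i) * (f (x n) - f xs)
        + (γ (n+1) / (1 - β (n+1)))
          * ((f (y (n+1)) - f xs) - β (n+1) * (f (x (n+1)) - f xs)) := by
    intro n
    set Sn : ℝ := ∑ i ∈ range (n+1), γ i with hSndef
    set G : ℝ := γ (n+1) with hGdef
    have hSn : 0 < Sn := hSpos n
    have hG : 0 < G := hγ (n+1)
    have hSn1 : ∑ i ∈ range (n+1+1), γ i = Sn + G := by
      rw [hSndef, hGdef]; exact sum_range_succ γ (n+1)
    have hSnG : 0 < Sn + G := by linarith
    set cc : ℝ := c (n+1) with hccdef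
    have hcc : cc = G / (Sn + G) := by
      rw [hccdef, hGdef, hSndef]
      have := hc (n+1)
      rw [this]
      congr 1
    have hccpos : 0 < cc := by rw [hcc]; positivity
    have hcc1 : cc ≤ 1 := by
      rw [hcc, div_le_one hSnG]; linarith
    set bb : ℝ := β (n+1) with hbbdef
    have hbb0 : 0 ≤ bb := hβ0 (n+1)
    have hbbD : 0 < 1 - bb := hD (n+1)
    set s : ℝ := 1 - bb + cc * bb with hsdef
    have hs : 0 < s := by
      have : 0 ≤ cc * bb := mul_nonneg hccpos.le hbb0
      rw [hsdef]; linarith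
    have hid : s • x (n+1) = ((1 - cc) * (1 - bb)) • x n + cc • y (n+1) := by
      rw [hsdef, hy (n+1), hx n, hbbdef, hccdef]; module
    have hxcomb : x (n+1) = (s⁻¹ * ((1 - cc) * (1 - bb))) • x n + (s⁻¹ * cc) • y (n+1) := by
      calc x (n+1) = s⁻¹ • (s • x (n+1)) := by
            rw [smul_smul, inv_mul_cancel₀ hs.ne', one_smul]
        _ = s⁻¹ • (((1 - cc) * (1 - bb)) • x n + cc • y (n+1)) := by rw [hid]
        _ = _ := by rw [smul_add, smul_smul, smul_smul]
    have hab : s⁻¹ * ((1 - cc) * (1 - bb)) + s⁻¹ * cc = 1 := by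
      have : (1 - cc) * (1 - bb) + cc = s := by rw [hsdef]; ring
      rw [← mul_add, this, inv_mul_cancel₀ hs.ne']
    have hcv := hconv.2 (Set.mem_univ (x n)) (Set.mem_univ (y (n+1)))
      (mul_nonneg (inv_nonneg.mpr hs.le)
        (mul_nonneg (by linarith) hbbD.le))
      (mul_nonneg (inv_nonneg.mpr hs.le) hccpos.le) hab
    rw [← hxcomb] at hcv
    have h1 : s * f (x (n+1)) ≤ ((1 - cc) * (1 - bb)) * f (x n) + cc * f (y (n+1)) := by
      have h := mul_le_mul_of_nonneg_left hcv hs.le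
      calc s * f (x (n+1))
          ≤ s * ((s⁻¹ * ((1 - cc) * (1 - bb))) * f (x n) + (s⁻¹ * cc) * f (y (n+1))) := h
        _ = (s * s⁻¹) * (((1 - cc) * (1 - bb)) * f (x n))
              + (s * s⁻¹) * (cc * f (y (n+1))) := by ring
        _ = _ := by rw [mul_inv_cancel₀ hs.ne']; ring
    have hccS : cc * (Sn + G) = G := by
      rw [hcc]; field_simp
    have h2 : ((Sn + G) * (1 - bb) + G * bb) * f (x (n+1))
        ≤ (Sn * (1 - bb)) * f (x n) + G * f (y (n+1)) := by
      have e1 : (Sn + G) * s = (Sn + G) * (1 - bb) + G * bb := by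
        rw [hsdef]; linear_combination bb * hccS
      have e2 : (Sn + G) * ((1 - cc) * (1 - bb)) = Sn * (1 - bb) := by
        linear_combination (bb - 1) * hccS
      have e3 : (Sn + G) * cc = G := by linear_combination hccS
      calc ((Sn + G) * (1 - bb) + G * bb) * f (x (n+1))
          = (Sn + G) * (s * f (x (n+1))) := by rw [← e1]; ring
        _ ≤ (Sn + G) * (((1 - cc) * (1 - bb)) * f (x n) + cc * f (y (n+1))) :=
            mul_le_mul_of_nonneg_left h1 hSnG.le
        _ = ((Sn + G) * ((1 - cc) * (1 - bb))) * f (x n) + ((Sn + G) * cc) * f (y (n+1)) := by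
            ring
        _ = (Sn * (1 - bb)) * f (x n) + G * f (y (n+1)) := by rw [e2, e3]
    rw [hSn1]
    rw [div_mul_eq_mul_div, ← sub_le_iff_le_add', le_div_iff₀ hbbD]
    nlinarith [h2]
  -- induction
  have main : ∀ n : ℕ, (∑ i ∈ range (n+1), γ i) * (f (x n) - f xs)
      ≤ γ 0 * (f (x 0) - f xs)
        + ∑ t ∈ range n, (γ (t+1) / (1 - β (t+1)))
            * ((f (y (t+1)) - f xs) - β (t+1) * (f (x (t+1)) - f xs)) := by
    intro n
    induction n with
    | zero => simp
    | succ n ih =>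
      have hstep := step n
      rw [sum_range_succ (fun t => γ (t+1) / (1 - β (t+1))
        * (f (y (t+1)) - f xs - β (t+1) * (f (x (t+1)) - f xs))) n]
      linarith
  -- compare bracket terms with inner-product terms
  have hsum : ∑ t ∈ range T, (γ (t+1) / (1 - β (t+1)))
        * ((f (y (t+1)) - f xs) - β (t+1) * (f (x (t+1)) - f xs))
      ≤ ∑ t ∈ range T, γ (t+1) * ⟪gradient f (y (t+1)), Z (t+1) - xs⟫_ℝ := by
    apply sum_le_sum
    intro t _
    have hk := keyB (t+1)
    have hnn : 0 ≤ γ (t+1) / (1 - β (t+1)) := (div_pos (hγ _) (hD _)).le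
    calc (γ (t+1) / (1 - β (t+1)))
          * ((f (y (t+1)) - f xs) - β (t+1) * (f (x (t+1)) - f xs))
        ≤ (γ (t+1) / (1 - β (t+1)))
            * ((1 - β (t+1)) * ⟪gradient f (y (t+1)), Z (t+1) - xs⟫_ℝ) :=
          mul_le_mul_of_nonneg_left hk hnn
      _ = γ (t+1) * ⟪gradient f (y (t+1)), Z (t+1) - xs⟫_ℝ := by
          rw [show γ (t+1) / (1 - β (t+1))
              * ((1 - β (t+1)) * ⟪gradient f (y (t+1)), Z (t+1) - xs⟫_ℝ)
            = γ (t+1) * ⟪gradient f (y (t+1)), Z (t+1) - xs⟫_ℝ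
              * ((1 - β (t+1)) / (1 - β (t+1))) from by ring,
            div_self (hD (t+1)).ne', mul_one]
  have hfirst : 0 ≤ γ 0 * ⟪gradient f (y 0), Z 0 - xs⟫_ℝ := by
    have h := grad (y 0) xs
    have hneg : ⟪gradient f (y 0), xs - y 0⟫_ℝ = - ⟪gradient f (y 0), y 0 - xs⟫_ℝ := by
      rw [← inner_neg_right]; congr 1; abel
    rw [hneg] at h
    have h0 : 0 ≤ ⟪gradient f (y 0), y 0 - xs⟫_ℝ := by
      have := hmin (y 0); linarith
    have hzy : Z 0 - xs = y 0 - xs := by rw [hZ0, ← hy0]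
    rw [hzy]
    exact mul_nonneg (hγ 0).le h0
  rw [sum_range_succ' (fun t => γ t * ⟪gradient f (y t), Z t - xs⟫_ℝ) T]
  have hmain := main T
  linarith [hsum, hfirst, hmain]
end

section
/- Let f : ℝ^d → ℝ be convex, differentiable, and G-Lipschitz (so ‖∇f(x)‖ ≤ G for all x), with minimizer x_⋆. Let γ_0,…,γ_T > 0, set c_t = γ_t / ∑_{i=0}^t γ_i, and let (x_t, y_t, z_t) follow the deterministic schedule-free recursion with z_{−1} = x_0 and β_t ∈ [0,1). Then f(x_T) − f(x_⋆) ≤ [½‖x_0 − x_⋆‖² + γ_0(f(x_0) − f(x_⋆)) + ½ G² ∑_{t=0}^T γ_t²] / ∑_{t=0}^T γ_t. -/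
open Finset
open scoped InnerProductSpace
open scoped RealInnerProductSpace

/-- Gradient inequality for convex differentiable functions. -/
lemma convex_grad_ineq {d : ℕ} (f : EuclideanSpace ℝ (Fin d) → ℝ)
    (hconv : ConvexOn ℝ Set.univ f) (hdiff : Differentiable ℝ f)
    (u v : EuclideanSpace ℝ (Fin d)) :
    f u + ⟪gradient f u, v - u⟫_ℝ ≤ f v := by
  have h1 : HasDerivAt (fun t : ℝ => u + t • (v - u)) (v - u) 0 := by
    simpa using ((hasDerivAt_id (0 : ℝ)).smul_const (v - u)).const_add u
  have h2 : HasFDerivAt f (InnerProductSpace.toDual ℝ _ (gradient f u))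
      (u + (0 : ℝ) • (v - u)) := by
    simpa using ((hdiff (u : EuclideanSpace ℝ (Fin d))).hasGradientAt).hasFDerivAt
  have hcomp : HasDerivAt (fun t : ℝ => f (u + t • (v - u)))
      (⟪gradient f u, v - u⟫_ℝ) 0 := by
    have h3 := h2.comp_hasDerivAt 0 h1
    rw [InnerProductSpace.toDual_apply_apply] at h3
    exact h3
  have hgc : ConvexOn ℝ Set.univ (fun t : ℝ => f (u + t • (v - u))) := by
    have h := hconv.comp_affineMap (AffineMap.lineMap u v)
    have he : (fun t : ℝ => f (u + t • (v - u))) =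
        (f ∘ (AffineMap.lineMap u v : ℝ →ᵃ[ℝ] EuclideanSpace ℝ (Fin d))) := by
      funext t
      simp only [Function.comp_apply, AffineMap.lineMap_apply_module']
      congr 1
      abel
    rw [he]
    simpa using h
  have hs := hgc.le_slope_of_hasDerivAt (Set.mem_univ (0 : ℝ)) (Set.mem_univ (1 : ℝ))
    one_pos hcomp
  rw [slope_def_field] at hs
  simp only [one_smul, zero_smul, add_zero] at hs
  have hv : u + (v - u) = v := by abel
  rw [hv] at hs
  simp only [div_one, sub_zero] at hs
  linarith

lemma half_norm_step {d : ℕ} (zv g xs : EuclideanSpace ℝ (Fin d)) (γ : ℝ) :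
    (1 / 2) * ‖(zv - γ • g) - xs‖ ^ 2 =
      (1 / 2) * ‖zv - xs‖ ^ 2 - γ * ⟪g, zv - xs⟫_ℝ + (1 / 2) * γ ^ 2 * ‖g‖ ^ 2 := by
  have h : (zv - γ • g) - xs = (zv - xs) - γ • g := by abel
  rw [h, norm_sub_sq_real, real_inner_smul_right, real_inner_comm, norm_smul]
  simp only [Real.norm_eq_abs, mul_pow, sq_abs]
  ring

set_option maxHeartbeats 1000000 in
/-- Deterministic version of the main convergence theorem for schedule-free
with an arbitrary schedule. Here `Z t` denotes `z_{t-1}`. -/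
theorem schedule_free_convergence {d : ℕ} (T : ℕ)
    (f : EuclideanSpace ℝ (Fin d) → ℝ)
    (hconv : ConvexOn ℝ Set.univ f) (hdiff : Differentiable ℝ f)
    (G : ℝ) (hG : ∀ v, ‖gradient f v‖ ≤ G)
    (xs : EuclideanSpace ℝ (Fin d)) (hmin : ∀ v, f xs ≤ f v)
    (γ : ℕ → ℝ) (hγ : ∀ t, 0 < γ t)
    (β : ℕ → ℝ) (hβ : ∀ t, β t ∈ Set.Ico (0 : ℝ) 1)
    (c : ℕ → ℝ) (hc : ∀ t, c t = γ t / ∑ i ∈ range (t + 1), γ i)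
    (x y Z : ℕ → EuclideanSpace ℝ (Fin d))
    (hZ0 : Z 0 = x 0)
    (hy : ∀ t, y t = (1 - β t) • Z t + β t • x t)
    (hZ : ∀ t, Z (t + 1) = Z t - γ t • gradient f (y t))
    (hx : ∀ t, x (t + 1) = (1 - c (t + 1)) • x t + c (t + 1) • Z (t + 1)) :
    f (x T) - f xs ≤
      ((1 / 2) * ‖x 0 - xs‖ ^ 2 + γ 0 * (f (x 0) - f xs) +
          (1 / 2) * G ^ 2 * ∑ t ∈ range (T + 1), (γ t) ^ 2) /
        ∑ t ∈ range (T + 1), γ t := by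
  have hgrad : ∀ u v, f u + ⟪gradient f u, v - u⟫_ℝ ≤ f v :=
    convex_grad_ineq f hconv hdiff
  set S : ℕ → ℝ := fun n => ∑ i ∈ range (n + 1), γ i with hSdef
  have hSpos : ∀ n, 0 < S n := by
    intro n
    exact Finset.sum_pos (fun i _ => hγ i) nonempty_range_add_one
  have hSsucc : ∀ n, S (n + 1) = S n + γ (n + 1) := by
    intro n
    simp only [hSdef]
    exact sum_range_succ γ (n + 1)
  have hgsq : ∀ v, ‖gradient f v‖ ^ 2 ≤ G ^ 2 := by
    intro v
    exact pow_le_pow_left₀ (norm_nonneg _) (hG v) 2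
  -- per-step inequality, for steps t = n+1 ≥ 1
  have hstep : ∀ n, (S n + γ (n + 1)) * (f (x (n + 1)) - f xs)
      - S n * (f (x n) - f xs)
      ≤ γ (n + 1) * ⟪gradient f (y (n + 1)), Z (n + 1 + 1 - 1) - xs⟫_ℝ := by
    intro n
    simp only [Nat.add_sub_cancel]
    have hΓpos : 0 < S n := hSpos n
    have hγp : 0 < γ (n + 1) := hγ (n + 1)
    obtain ⟨hb0, hb1⟩ := hβ (n + 1)
    have hsum2 : (∑ i ∈ range (n + 1 + 1), γ i) = S n + γ (n + 1) := by
      rw [sum_range_succ]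
    have hcval : c (n + 1) = γ (n + 1) / (S n + γ (n + 1)) := by
      rw [hc (n + 1), hsum2]
    have hΓ'pos : 0 < S n + γ (n + 1) := by linarith
    have hEpos : 0 < (1 - β (n + 1)) * S n + γ (n + 1) := by nlinarith
    have hΓ'ne : (S n + γ (n + 1)) ≠ 0 := ne_of_gt hΓ'pos
    have hEne : ((1 - β (n + 1)) * S n + γ (n + 1)) ≠ 0 := ne_of_gt hEpos
    set θ : ℝ := γ (n + 1) / ((1 - β (n + 1)) * S n + γ (n + 1)) with hθdef
    set μ : ℝ := γ (n + 1) * β (n + 1) * S n / ((1 - β (n + 1)) * S n + γ (n + 1))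
      with hμdef
    have hθ0 : 0 ≤ θ := by
      rw [hθdef]
      exact div_nonneg hγp.le hEpos.le
    have hθ1 : θ ≤ 1 := by
      rw [hθdef, div_le_one hEpos]
      nlinarith
    have hμ0 : 0 ≤ μ := by
      rw [hμdef]
      exact div_nonneg (mul_nonneg (mul_nonneg hγp.le hb0) hΓpos.le) hEpos.le
    have hθμ : (S n + γ (n + 1)) * θ = γ (n + 1) + μ := by
      rw [hθdef, hμdef]
      field_simp
      ring
    have hXcomb : x (n + 1) = θ • y (n + 1) + (1 - θ) • x n := by
      rw [hy (n + 1), hx n, hcval, hθdef]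
      match_scalars <;> (field_simp; ring)
    have hZcomb : γ (n + 1) • Z (n + 1) - γ (n + 1) • y (n + 1) =
        μ • y (n + 1) - μ • x n := by
      rw [hy (n + 1), hx n, hcval, hμdef]
      match_scalars <;> (field_simp; ring)
    have e1 : γ (n + 1) * ⟪gradient f (y (n + 1)), Z (n + 1) - xs⟫_ℝ =
        γ (n + 1) * ⟪gradient f (y (n + 1)), y (n + 1) - xs⟫_ℝ +
          μ * ⟪gradient f (y (n + 1)), y (n + 1) - x n⟫_ℝ := by
      have h := congrArg (fun w => ⟪gradient f (y (n + 1)), w⟫_ℝ) hZcomb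
      simp only [inner_sub_right, real_inner_smul_right] at h ⊢
      linarith
    have j1 : γ (n + 1) * (f (y (n + 1)) - f xs) ≤
        γ (n + 1) * ⟪gradient f (y (n + 1)), y (n + 1) - xs⟫_ℝ := by
      apply mul_le_mul_of_nonneg_left _ hγp.le
      have h := hgrad (y (n + 1)) xs
      simp only [inner_sub_right] at h ⊢
      linarith
    have j2 : μ * (f (y (n + 1)) - f (x n)) ≤
        μ * ⟪gradient f (y (n + 1)), y (n + 1) - x n⟫_ℝ := by
      apply mul_le_mul_of_nonneg_left _ hμ0
      have h := hgrad (y (n + 1)) (x n)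
      simp only [inner_sub_right] at h ⊢
      linarith
    have i3 : f (x (n + 1)) ≤ θ * f (y (n + 1)) + (1 - θ) * f (x n) := by
      rw [hXcomb]
      simpa using
        hconv.2 (Set.mem_univ (y (n + 1))) (Set.mem_univ (x n)) hθ0
          (by linarith) (by ring)
    have j3 : (S n + γ (n + 1)) * f (x (n + 1)) ≤
        (γ (n + 1) + μ) * f (y (n + 1)) +
          ((S n + γ (n + 1)) - (γ (n + 1) + μ)) * f (x n) := by
      have h3 := mul_le_mul_of_nonneg_left i3 hΓ'pos.le
      calc (S n + γ (n + 1)) * f (x (n + 1)) ≤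
          (S n + γ (n + 1)) * (θ * f (y (n + 1)) + (1 - θ) * f (x n)) := h3
        _ = (γ (n + 1) + μ) * f (y (n + 1)) +
              ((S n + γ (n + 1)) - (γ (n + 1) + μ)) * f (x n) := by
            linear_combination (f (y (n + 1)) - f (x n)) * hθμ
    linarith [e1, j1, j2, j3]
  -- main induction
  have key : ∀ n, S n * (f (x n) - f xs) + (1 / 2) * ‖Z (n + 1) - xs‖ ^ 2 ≤
      γ 0 * (f (x 0) - f xs) + (1 / 2) * ‖x 0 - xs‖ ^ 2 +
        (1 / 2) * G ^ 2 * ∑ t ∈ range (n + 1), (γ t) ^ 2 := by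
    intro n
    induction n with
    | zero =>
        have hy0 : y 0 = x 0 := by
          rw [hy 0, hZ0]
          match_scalars <;> ring
        have hgi := hgrad (x 0) xs
        rw [← hy0] at hgi ⊢
        have hexp := half_norm_step (Z 0) (gradient f (y 0)) xs (γ 0)
        rw [← hZ 0] at hexp
        rw [hZ0] at hexp
        have hEpos : 0 ≤ f (y 0) - f xs := by
          have := hmin (y 0); linarith
        have hI : f (y 0) - f xs ≤ ⟪gradient f (y 0), y 0 - xs⟫_ℝ := by
          have := hgrad (y 0) xs
          have hsub : ⟪gradient f (y 0), xs - y 0⟫_ℝ =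
              -⟪gradient f (y 0), y 0 - xs⟫_ℝ := by
            rw [← inner_neg_right]; congr 1; abel
          rw [hsub] at this
          linarith
        have hmul : γ 0 * (f (y 0) - f xs) ≤ γ 0 * ⟪gradient f (y 0), y 0 - xs⟫_ℝ :=
          mul_le_mul_of_nonneg_left hI (le_of_lt (hγ 0))
        have hg2 : γ 0 ^ 2 * ‖gradient f (y 0)‖ ^ 2 ≤ γ 0 ^ 2 * G ^ 2 :=
          mul_le_mul_of_nonneg_left (hgsq (y 0)) (sq_nonneg _)
        have hS0 : S 0 = γ 0 := by simp [hSdef]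
        have hsum0 : ∑ t ∈ range 1, (γ t) ^ 2 = γ 0 ^ 2 := by simp
        rw [hS0, hsum0]
        have h0 : 0 ≤ γ 0 * (f (y 0) - f xs) :=
          mul_nonneg (le_of_lt (hγ 0)) hEpos
        rw [← hy0] at hexp
        linarith [hexp, hmul, hg2, h0]
    | succ n ih =>
        have hexp := half_norm_step (Z (n + 1)) (gradient f (y (n + 1))) xs (γ (n + 1))
        rw [← hZ (n + 1)] at hexp
        have hstepn := hstep n
        have hg2 : γ (n + 1) ^ 2 * ‖gradient f (y (n + 1))‖ ^ 2 ≤ γ (n + 1) ^ 2 * G ^ 2 :=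
          mul_le_mul_of_nonneg_left (hgsq (y (n + 1))) (sq_nonneg _)
        have hsums : ∑ t ∈ range (n + 1 + 1), (γ t) ^ 2 =
            (∑ t ∈ range (n + 1), (γ t) ^ 2) + γ (n + 1) ^ 2 :=
          sum_range_succ _ (n + 1)
        rw [hSsucc n, hsums]
        simp only [Nat.add_sub_cancel] at hstepn
        nlinarith [hexp, hstepn, hg2, ih]
  -- conclude
  have hkey := key T
  have hnn : 0 ≤ (1 / 2) * ‖Z (T + 1) - xs‖ ^ 2 := by positivity
  rw [le_div_iff₀ (hSpos T)]
  have : S T * (f (x T) - f xs) ≤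
      γ 0 * (f (x 0) - f xs) + (1 / 2) * ‖x 0 - xs‖ ^ 2 +
        (1 / 2) * G ^ 2 * ∑ t ∈ range (T + 1), (γ t) ^ 2 := by linarith
  calc (f (x T) - f xs) * ∑ t ∈ range (T + 1), γ t = S T * (f (x T) - f xs) := by
        rw [hSdef]; ring
    _ ≤ _ := by linarith
end

section
/- Let η_t be the wsd schedule with parameters 0 ≤ T_w ≤ T_c ≤ T. Then ∑_{t=0}^T η_t² ≤ (2/3)(T + T_c − T_w + 2). -/
open Finset

lemma sum_sq_shift (n : ℕ) :
    ∑ i ∈ Finset.range n, ((i : ℝ) + 1) ^ 2 = (n : ℝ) * ((n : ℝ) + 1) * (2 * (n : ℝ) + 1) / 6 := by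
  induction n with
  | zero => simp
  | succ k ih =>
    rw [Finset.sum_range_succ, ih]
    push_cast
    ring

lemma sum_sq_rev (M : ℕ) :
    ∑ k ∈ Finset.range M, ((M : ℝ) - k) ^ 2 = (M : ℝ) * ((M : ℝ) + 1) * (2 * (M : ℝ) + 1) / 6 := by
  have hrefl := Finset.sum_range_reflect (fun j => ((j : ℝ) + 1) ^ 2) M
  rw [← sum_sq_shift M, ← hrefl]
  apply Finset.sum_congr rfl
  intro k hk
  have hk' := Finset.mem_range.mp hk
  have hcast : ((M - 1 - k : ℕ) : ℝ) = (M : ℝ) - 1 - k := by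
    have h : M - 1 - k = M - (1 + k) := by omega
    rw [h, Nat.cast_sub (by omega)]
    push_cast; ring
  simp only [hcast]
  ring

theorem wsd_sum_sq (T Tw Tc : ℕ) (hTw : Tw ≤ Tc) (hTc : Tc ≤ T)
    (η : ℕ → ℝ)
    (hwarm : ∀ t ≤ Tw, η t = ((t : ℝ) + 1) / ((Tw : ℝ) + 1))
    (hstable : ∀ t, Tw < t → t ≤ Tc → η t = 1)
    (hcool : ∀ t, Tc < t → t ≤ T →
      η t = ((T : ℝ) - t + 1) / ((T : ℝ) - Tc + 1)) :
    ∑ t ∈ range (T + 1), (η t) ^ 2 ≤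
      (2 / 3) * ((T : ℝ) + Tc - Tw + 2) := by
  have h1 : Tw + 1 ≤ Tc + 1 := by omega
  have h2 : Tc + 1 ≤ T + 1 := by omega
  rw [Finset.range_eq_Ico,
    ← Finset.sum_Ico_consecutive (fun t => η t ^ 2) (Nat.zero_le (Tw + 1)) (le_trans h1 h2),
    ← Finset.sum_Ico_consecutive (fun t => η t ^ 2) h1 h2]
  have hA : ∑ t ∈ Finset.Ico 0 (Tw + 1), η t ^ 2
      = ((Tw : ℝ) + 1) * ((Tw : ℝ) + 2) * (2 * (Tw : ℝ) + 3) / 6 / ((Tw : ℝ) + 1) ^ 2 := by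
    rw [show Finset.Ico 0 (Tw + 1) = Finset.range (Tw + 1) by rw [Finset.range_eq_Ico]]
    rw [Finset.sum_congr rfl (fun t ht => by
      rw [hwarm t (Nat.lt_succ_iff.mp (Finset.mem_range.mp ht))])]
    simp_rw [div_pow]
    rw [← Finset.sum_div, sum_sq_shift]
    push_cast
    ring
  have hB : ∑ t ∈ Finset.Ico (Tw + 1) (Tc + 1), η t ^ 2 = (Tc : ℝ) - Tw := by
    rw [Finset.sum_congr rfl (fun t ht => by
      obtain ⟨ha, hb⟩ := Finset.mem_Ico.mp ht
      rw [hstable t (by omega) (by omega)])]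
    simp [Nat.card_Ico]
    exact Nat.cast_sub hTw
  have hC : ∑ t ∈ Finset.Ico (Tc + 1) (T + 1), η t ^ 2
      = ((T : ℝ) - Tc) * ((T : ℝ) - Tc + 1) * (2 * ((T : ℝ) - Tc) + 1) / 6
        / ((T : ℝ) - Tc + 1) ^ 2 := by
    rw [Finset.sum_congr rfl (fun t ht => by
      obtain ⟨ha, hb⟩ := Finset.mem_Ico.mp ht
      rw [hcool t (by omega) (by omega)])]
    rw [Finset.sum_Ico_eq_sum_range]
    have hM : T + 1 - (Tc + 1) = T - Tc := by omega
    rw [hM]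
    simp_rw [div_pow]
    have hstep : ∀ k ∈ Finset.range (T - Tc),
        ((T : ℝ) - ↑(Tc + 1 + k) + 1) ^ 2 / ((T : ℝ) - Tc + 1) ^ 2
          = (((T - Tc : ℕ) : ℝ) - k) ^ 2 / ((T : ℝ) - Tc + 1) ^ 2 := by
      intro k hk
      congr 1
      rw [Nat.cast_sub hTc]
      push_cast
      ring
    rw [Finset.sum_congr rfl hstep]
    rw [← Finset.sum_div, sum_sq_rev]
    rw [Nat.cast_sub hTc]
  rw [hA, hB, hC]
  have hp : (0 : ℝ) < (Tw : ℝ) + 1 := by positivity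
  have hq : (0 : ℝ) < (T : ℝ) - Tc + 1 := by
    have : (Tc : ℝ) ≤ T := Nat.cast_le.mpr hTc
    linarith
  have hy : (0 : ℝ) ≤ (Tc : ℝ) - Tw := by
    have : (Tw : ℝ) ≤ Tc := Nat.cast_le.mpr hTw
    linarith
  have hAle : ((Tw : ℝ) + 1) * ((Tw : ℝ) + 2) * (2 * (Tw : ℝ) + 3) / 6 / ((Tw : ℝ) + 1) ^ 2
      ≤ (2 / 3) * (Tw : ℝ) + 1 := by
    rw [div_div, div_le_iff₀ (by positivity)]
    nlinarith [sq_nonneg ((Tw : ℝ)), Nat.cast_nonneg (α := ℝ) Tw]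
  have hCle : ((T : ℝ) - Tc) * ((T : ℝ) - Tc + 1) * (2 * ((T : ℝ) - Tc) + 1) / 6
        / ((T : ℝ) - Tc + 1) ^ 2
      ≤ (2 / 3) * ((T : ℝ) - Tc) := by
    rw [div_div, div_le_iff₀ (by positivity : (0:ℝ) < 6 * (((T : ℝ) - Tc + 1) ^ 2))]
    have hz : (0 : ℝ) ≤ (T : ℝ) - Tc := by
      have hct : (Tc : ℝ) ≤ T := Nat.cast_le.mpr hTc
      linarith
    nlinarith [sq_nonneg ((T : ℝ) - Tc), mul_nonneg hz hz]
  linarith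
end

section
/- Let f_ζ : ℝ^d → ℝ be convex and differentiable, β ∈ [0,1), and suppose z_{t−1} = y_t − (β/(1−β))(x_t − y_t), z_t = z_{t−1} − γ_t ∇f_ζ(y_t) with the Polyak step γ_t = ( f_ζ(y_t) − f_ζ(x_⋆) + β⟨∇f_ζ(y_t), z_{t−1} − x_t⟩ )_+ / ‖∇f_ζ(y_t)‖², where ∇f_ζ(y_t) ≠ 0. Then ‖z_t − x_⋆‖² ≤ ‖z_{t−1} − x_⋆‖² − ( f_ζ(y_t) − f_ζ(x_⋆) + β⟨∇f_ζ(y_t), z_{t−1} − x_t⟩ )_+² / ‖∇f_ζ(y_t)‖². -/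
open scoped InnerProductSpace

lemma grad_convex_ineq {d : ℕ} (f : EuclideanSpace ℝ (Fin d) → ℝ)
    (hconv : ConvexOn ℝ Set.univ f) (hdiff : Differentiable ℝ f)
    (y w : EuclideanSpace ℝ (Fin d)) :
    f y + ⟪gradient f y, w - y⟫_ℝ ≤ f w := by
  set g : ℝ → ℝ := fun t => f (y + t • (w - y)) with hg
  have hline : HasDerivAt (fun t : ℝ => y + t • (w - y)) (w - y) 0 := by
    simpa using ((hasDerivAt_id (0:ℝ)).smul_const (w - y)).const_add y
  have hF : HasFDerivAt f (InnerProductSpace.toDual ℝ _ (gradient f y)) y := by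
    rw [← hasGradientAt_iff_hasFDerivAt]
    exact (hdiff y).hasGradientAt
  have hF' : HasFDerivAt f (InnerProductSpace.toDual ℝ _ (gradient f y))
      (y + (0:ℝ) • (w - y)) := by simpa using hF
  have hgd : HasDerivAt g (⟪gradient f y, w - y⟫_ℝ) 0 := by
    exact hF'.comp_hasDerivAt 0 hline
  have gconv : ConvexOn ℝ Set.univ g := by
    have := hconv.comp_affineMap (AffineMap.lineMap y w : ℝ →ᵃ[ℝ] _)
    have heq : (f ∘ (AffineMap.lineMap y w : ℝ →ᵃ[ℝ] _)) = g := by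
      funext t
      simp [hg, AffineMap.lineMap_apply, add_comm]
    rw [heq] at this
    simpa using this
  have hs := gconv.le_slope_of_hasDerivAt (Set.mem_univ (0:ℝ)) (Set.mem_univ (1:ℝ))
    one_pos hgd
  have : slope g 0 1 = f w - f y := by
    simp [slope, hg]
  rw [this] at hs
  linarith

theorem schedulep_single_step {d : ℕ}
    (f : EuclideanSpace ℝ (Fin d) → ℝ)
    (hconv : ConvexOn ℝ Set.univ f) (hdiff : Differentiable ℝ f)
    (β : ℝ) (hβ0 : 0 ≤ β) (hβ1 : β < 1)
    (x y zprev z xs : EuclideanSpace ℝ (Fin d))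
    (hgrad : gradient f y ≠ 0)
    (hzprev : zprev = y - (β / (1 - β)) • (x - y))
    (γ : ℝ)
    (hγ : γ = (max (f y - f xs + β * ⟪gradient f y, zprev - x⟫_ℝ) 0) /
      ‖gradient f y‖ ^ 2)
    (hz : z = zprev - γ • gradient f y) :
    ‖z - xs‖ ^ 2 ≤ ‖zprev - xs‖ ^ 2 -
      (max (f y - f xs + β * ⟪gradient f y, zprev - x⟫_ℝ) 0) ^ 2 /
        ‖gradient f y‖ ^ 2 := by
  set g := gradient f y with hgdef
  set A := f y - f xs + β * ⟪g, zprev - x⟫_ℝ with hA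
  have hβ' : (1:ℝ) - β ≠ 0 := by linarith
  have hg2 : (0:ℝ) < ‖g‖ ^ 2 := by
    have := norm_pos_iff.mpr hgrad
    positivity
  -- key inequality : A ≤ ⟪g, zprev - xs⟫
  have hkey : A ≤ ⟪g, zprev - xs⟫_ℝ := by
    have h1 := grad_convex_ineq f hconv hdiff y xs
    have h1' : f y - f xs ≤ ⟪g, y⟫_ℝ - ⟪g, xs⟫_ℝ := by
      rw [inner_sub_right] at h1; linarith
    rw [hA, hzprev]
    simp only [inner_sub_right, inner_smul_right, sub_sub_eq_add_sub]
    have e : β * (⟪g, y⟫_ℝ - β/(1-β) * (⟪g, x⟫_ℝ - ⟪g, y⟫_ℝ) - ⟪g, x⟫_ℝ)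
        = - (β/(1-β)) * (⟪g, x⟫_ℝ - ⟪g, y⟫_ℝ) := by
      field_simp; ring
    linarith [h1', e]
  rcases le_or_gt A 0 with hA0 | hA0
  · rw [max_eq_right hA0] at hγ ⊢
    simp only [zero_div] at hγ
    rw [hz, hγ]
    simp
  · rw [max_eq_left hA0.le] at hγ ⊢
    have hexp : ‖z - xs‖ ^ 2 = ‖zprev - xs‖ ^ 2 - 2 * (γ * ⟪g, zprev - xs⟫_ℝ)
        + γ ^ 2 * ‖g‖ ^ 2 := by
      rw [hz]
      have : zprev - γ • g - xs = (zprev - xs) - γ • g := by abel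
      rw [this, norm_sub_sq_real, real_inner_smul_right, norm_smul,
        real_inner_comm]
      simp [mul_pow, abs_mul_abs_self]
    rw [hexp, hγ]
    have h2 : A / ‖g‖ ^ 2 * ⟪g, zprev - xs⟫_ℝ ≥ A / ‖g‖ ^ 2 * A :=
      mul_le_mul_of_nonneg_left hkey (by positivity)
    have h3 : (A / ‖g‖ ^ 2) ^ 2 * ‖g‖ ^ 2 = A ^ 2 / ‖g‖ ^ 2 := by
      field_simp
    rw [h3]
    have h4 : A / ‖g‖ ^ 2 * A = A ^ 2 / ‖g‖ ^ 2 := by ring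
    nlinarith [h2]
end

section
/- Let (x_t) be generated by the momentum method m_t = (λ_t/(1+λ_t)) m_{t−1} + (1/(1+λ_t)) g_t, x_{t+1} = x_t − α_t m_t with m_{−1} = 0, and let (x'_t, z_t) be generated by primal averaging z_t = z_{t−1} − γ_t g_t, x'_{t+1} = (1−c_{t+1})x'_t + c_{t+1}z_t with z_{−1} = x'_0 = x_0 and the same gradient sequence g_t evaluated at x_t. If the parameters satisfy c_1γ_0 = α_0/(1+λ_0), and for t ≥ 1, α_{t−1}(1/c_t − 1)(1+λ_t)/λ_t = α_t/c_{t+1} and γ_t = (α_{t−1}/λ_t)(1/c_t − 1), then x_t = x'_t for all t. -/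
/-- Equivalence of heavy-ball momentum and primal averaging. Here `M t`
denotes `m_{t-1}` (so `M 0 = m_{-1} = 0` and `M (t+1) = m_t`), and `Z t`
denotes `z_{t-1}` (so `Z 0 = z_{-1} = x 0` and `Z (t+1) = z_t`). -/
theorem momentum_eq_primal_averaging {d : ℕ}
    (g : ℕ → EuclideanSpace ℝ (Fin d))
    (α lam γ c : ℕ → ℝ)
    (hα : ∀ t, 0 < α t) (hlam : ∀ t, 0 < lam t) (hγ : ∀ t, 0 < γ t)
    (hc : ∀ t, c t ∈ Set.Ioc (0 : ℝ) 1)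
    (x x' M Z : ℕ → EuclideanSpace ℝ (Fin d))
    (hM0 : M 0 = 0)
    (hM : ∀ t, M (t + 1) = (lam t / (1 + lam t)) • M t + (1 / (1 + lam t)) • g t)
    (hxm : ∀ t, x (t + 1) = x t - α t • M (t + 1))
    (hx'0 : x' 0 = x 0) (hZ0 : Z 0 = x 0)
    (hZ : ∀ t, Z (t + 1) = Z t - γ t • g t)
    (hx' : ∀ t, x' (t + 1) = (1 - c (t + 1)) • x' t + c (t + 1) • Z (t + 1))
    (hinit : c 1 * γ 0 = α 0 / (1 + lam 0))
    (hcouple : ∀ t, 1 ≤ t →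
      α (t - 1) * (1 / c t - 1) * ((1 + lam t) / lam t) = α t / c (t + 1) ∧
      γ t = (α (t - 1) / lam t) * (1 / c t - 1)) :
    ∀ t, x t = x' t := by
  have hcne : ∀ t, c t ≠ 0 := fun t => ne_of_gt (hc t).1
  have hlne : ∀ t, (1 + lam t) ≠ 0 := fun t => by have := hlam t; linarith
  have key : ∀ t, x t = x' t ∧ Z (t + 1) = x t - (α t / c (t + 1)) • M (t + 1) := by
    intro t
    induction t with
    | zero =>
      refine ⟨hx'0.symm, ?_⟩
      rw [hZ 0, hZ0, hM 0, hM0]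
      match_scalars
      · ring
      · have h0 := hlne 0
        have h1 := hcne 1
        field_simp
        field_simp at hinit
        linarith [hinit]
    | succ t ih =>
      obtain ⟨h1, h2⟩ := ih
      obtain ⟨hA, hB⟩ := hcouple (t + 1) (by omega)
      simp only [Nat.add_sub_cancel] at hA hB
      have hcc := hcne (t + 1)
      have hc2 := hcne (t + 2)
      have hll := hlne (t + 1)
      have hl' := (hlam (t + 1)).ne'
      constructor
      · rw [hxm t, hx' t, h2, ← h1]
        match_scalars
        · ring
        · field_simp
      · rw [hZ (t + 1), h2, hxm t, hM (t + 1)]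
        match_scalars
        · ring
        · rw [← hA]
          field_simp
          ring
        · rw [← hA, hB]
          field_simp
  exact fun t => (key t).1
end
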